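/- Let S = M₁ − M₂ where M_i = Σ_{j=1}^k j·N_j^{(i)} with all 2k Poisson variables N_j^{(i)} (mean λ_j^{(i)}μ) mutually independent. Then for every n ∈ ℤ, Pr{S = n} = e^{−(Λ^{(1)}+Λ^{(2)})μ} Σ_{(n₁,…,n_k)∈ Θ̃(k,n)} ∏_{j=1}^k (λ_j^{(1)}/λ_j^{(2)})^{n_j/2} I_{|n_j|}(2μ√(λ_j^{(1)}λ_j^{(2)})), where Θ̃(k,n) = {(n₁,…,n_k) ∈ ℤ^k : Σ_j j·n_j = n}, Λ^{(i)} = Σ_{j=1}^k λ_j^{(i)}, and I_ν is the modified Bessel function of the first kind. -/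

import Mathlib

/-!
Write `S = Σ_j j D_j` with `D_j = N_j^{(1)} - N_j^{(2)}`. By independence, `P{S = n}` is the sum
of `∏ P{N = y}` over the configurations `y ∈ ℕ^{2k}` with `Σ_j j (y_{1j} - y_{2j}) = n`.
Reparametrising each pair `(a, b) ∈ ℕ²` by `(a - b, min a b) ∈ ℤ × ℕ` turns this into a sum over
`(n_j) ∈ Θ̃(k, n)` of products over `j` of the one-dimensional series
`Σ_t Pois(x)(t + n_j⁺) Pois(y)(t + n_j⁻)`, the Skellam probabilities `P{D_j = n_j}`. Each of these
equals `e^{-x-y} (x/y)^{n_j/2} I_{|n_j|}(2√(xy))`, by comparison with the Bessel series term by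
term.
-/

open Real MeasureTheory ProbabilityTheory

/-- The modified Bessel function of the first kind of nonnegative integer order. -/
noncomputable def besselI (ν : ℕ) (x : ℝ) : ℝ :=
  ∑' m : ℕ, (x / 2) ^ (2 * m + ν) / (m.factorial * Real.Gamma (m + ν + 1))

lemma besselI_nonneg (ν : ℕ) {x : ℝ} (hx : 0 ≤ x) : 0 ≤ besselI ν x :=
  tsum_nonneg fun m => by
    have := Real.Gamma_nonneg_of_nonneg (s := m + ν + 1) (by positivity)
    positivity

lemma exp_neg_mul_pow_div_factorial_le_one {x : ℝ} (hx : 0 ≤ x) (m : ℕ) :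
    exp (-x) * x ^ m / m.factorial ≤ 1 := by
  rw [mul_div_assoc, exp_neg, inv_mul_le_iff₀ (exp_pos x), mul_one]
  exact pow_div_factorial_le_exp _ hx m

lemma sqrt_div_pow_mul_sqrt_mul_pow {x y : ℝ} (hx : 0 ≤ x) (hy : 0 < y) (d t : ℕ) :
    √(x / y) ^ d * √(x * y) ^ (2 * t + d) = x ^ (t + d) * y ^ t := by
  have hxy : √(x / y) * √(x * y) = x := by
    rw [← sqrt_mul (div_nonneg hx hy.le), show x / y * (x * y) = x ^ 2 by field_simp,
      sqrt_sq hx]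
  calc √(x / y) ^ d * √(x * y) ^ (2 * t + d)
      = (√(x / y) * √(x * y)) ^ d * (√(x * y) ^ 2) ^ t := by ring
    _ = x ^ (t + d) * y ^ t := by rw [hxy, sq_sqrt (by positivity)]; ring

lemma sqrt_mul_mul_mul_self {a b c : ℝ} (hc : 0 ≤ c) : √(a * c * (b * c)) = c * √(a * b) := by
  rw [show a * c * (b * c) = c ^ 2 * (a * b) by ring, sqrt_mul (sq_nonneg c), sqrt_sq hc]

lemma hasSum_poisson_shift_mul_poisson {x y : ℝ} (hx : 0 < x) (hy : 0 < y) (d : ℕ) :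
    HasSum (fun t : ℕ => exp (-x) * x ^ (t + d) / (t + d).factorial *
        (exp (-y) * y ^ t / t.factorial))
      (exp (-x) * exp (-y) * √(x / y) ^ d * besselI d (2 * √(x * y))) := by
  have hterm : ∀ t : ℕ, exp (-x) * x ^ (t + d) / (t + d).factorial *
      (exp (-y) * y ^ t / t.factorial) = exp (-x) * exp (-y) * √(x / y) ^ d *
        ((2 * √(x * y) / 2) ^ (2 * t + d) / (t.factorial * Real.Gamma (t + d + 1))) := by
    intro t
    rw [mul_div_cancel_left₀ _ two_ne_zero, ← Nat.cast_add, Real.Gamma_nat_eq_factorial,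
      mul_div_assoc', mul_div_assoc', mul_assoc _ (√(x / y) ^ d),
      sqrt_div_pow_mul_sqrt_mul_pow hx.le hy]
    field_simp
  have hsum : Summable (fun t : ℕ => exp (-x) * x ^ (t + d) / (t + d).factorial *
      (exp (-y) * y ^ t / t.factorial)) := by
    refine Summable.of_nonneg_of_le (fun t => by positivity) (fun t => ?_)
      ((summable_nat_add_iff d).2 (summable_pow_div_factorial x) |>.mul_left (exp (-x)))
    exact (mul_le_of_le_one_right (by positivity)
      (exp_neg_mul_pow_div_factorial_le_one hy.le t)).trans_eq (mul_div_assoc ..)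
  convert hsum.hasSum using 1
  simp only [hterm, tsum_mul_left, besselI]

lemma hasSum_skellam {x y : ℝ} (hx : 0 < x) (hy : 0 < y) (f : ℤ) :
    HasSum (fun t : ℕ => exp (-x) * x ^ (t + f.toNat) / (t + f.toNat).factorial *
        (exp (-y) * y ^ (t + (-f).toNat) / (t + (-f).toNat).factorial))
      (exp (-x) * exp (-y) * √(x / y) ^ f * besselI f.natAbs (2 * √(x * y))) := by
  obtain ⟨d, rfl | rfl⟩ := Int.eq_nat_or_neg f
  · simpa using hasSum_poisson_shift_mul_poisson hx hy d
  · have hswap : √(x / y) ^ (-(d : ℤ)) = √(y / x) ^ d := by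
      rw [zpow_neg, zpow_natCast, ← inv_pow, ← sqrt_inv, inv_div]
    simp only [Int.toNat_neg_natCast, neg_neg, Int.toNat_natCast, add_zero, Int.natAbs_neg,
      Int.natAbs_natCast, hswap]
    convert hasSum_poisson_shift_mul_poisson hy hx d using 1
    · ext t; ring
    · rw [mul_comm x y]; ring

lemma measure_preimage_eq_tsum_prod_of_iIndepFun {Ω ι β : Type*} [MeasurableSpace Ω]
    {P : Measure Ω} [IsProbabilityMeasure P] [Fintype ι] [Countable β] [MeasurableSpace β]
    [MeasurableSingletonClass β] {X : ι → Ω → β} (hX : ∀ i, Measurable (X i))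
    (hind : iIndepFun X P) (s : Set (ι → β)) :
    P ((fun ω i => X i ω) ⁻¹' s) = ∑' y, s.indicator (fun y => ∏ i, P (X i ⁻¹' {y i})) y := by
  have hjoint : Measurable fun ω i => X i ω := measurable_pi_lambda _ hX
  rw [← Measure.map_apply hjoint (s.to_countable.measurableSet),
    (iIndepFun_iff_map_fun_eq_pi_map fun i => (hX i).aemeasurable).1 hind,
    ← Measure.tsum_indicator_apply_singleton _ _ (s.to_countable.measurableSet)]
  congr! with y
  rw [← Set.univ_pi_singleton, Measure.pi_pi]
  exact Finset.prod_congr rfl fun i _ => Measure.map_apply (hX i) (measurableSet_singleton _)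

lemma ENNReal.tsum_fin_pi_prod {k : ℕ} (g : Fin k → ℕ → ENNReal) :
    ∑' m : Fin k → ℕ, ∏ j, g j (m j) = ∏ j, ∑' t, g j t := by
  induction k with
  | zero => simp
  | succ k ih =>
    rw [← (Fin.consEquiv fun _ => ℕ).tsum_eq, ENNReal.tsum_prod', Fin.prod_univ_succ]
    simp only [Fin.consEquiv_apply, Fin.prod_univ_succ, Fin.cons_zero, Fin.cons_succ,
      ENNReal.tsum_mul_left, ENNReal.tsum_mul_right, ih fun j => g j.succ]

def diffMinEquiv (ι : Type*) : (Fin 2 × ι → ℕ) ≃ (ι → ℤ) × (ι → ℕ) where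
  toFun y := (fun j => y (0, j) - y (1, j), fun j => min (y (0, j)) (y (1, j)))
  invFun q p := ![q.2 p.2 + (q.1 p.2).toNat, q.2 p.2 + (-q.1 p.2).toNat] p.1
  left_inv y := by
    funext ⟨i, j⟩
    fin_cases i <;> simp <;> omega
  right_inv q := by
    ext j
    · simp
    · simp; omega

lemma tsum_indicator_weighted_diff_eq {k : ℕ} (w : Fin 2 → Fin k → ℕ → ENNReal)
    (c : Fin k → ℤ) (n : ℤ) :
    ∑' y : Fin 2 × Fin k → ℕ,
        {y : Fin 2 × Fin k → ℕ | ∑ j, c j * ((y (0, j) : ℤ) - y (1, j)) = n}.indicator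
          (fun y => ∏ p, w p.1 p.2 (y p)) y
      = ∑' f : Fin k → ℤ, if ∑ j, c j * f j = n then
          ∏ j, ∑' t, w 0 j (t + (f j).toNat) * w 1 j (t + (-f j).toNat) else 0 := by
  rw [← (diffMinEquiv (Fin k)).symm.tsum_eq, ENNReal.tsum_prod']
  refine tsum_congr fun f => ?_
  have hdiff (m : Fin k → ℕ) (j : Fin k) :
      ((diffMinEquiv (Fin k)).symm (f, m) (0, j) : ℤ) - (diffMinEquiv (Fin k)).symm (f, m) (1, j)
        = f j :=
    congrFun (congrArg Prod.fst ((diffMinEquiv (Fin k)).apply_symm_apply (f, m))) j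
  simp only [Set.indicator_apply, Set.mem_ofPred_eq, hdiff]
  split_ifs
  · rw [← ENNReal.tsum_fin_pi_prod]
    refine tsum_congr fun m => ?_
    rw [Fintype.prod_prod_type, Fin.prod_univ_two, ← Finset.prod_mul_distrib]
    rfl
  · simp

lemma tsum_ofReal_eq_ofReal_tsum_of_ne_top {α : Type*} {g : α → ℝ} (hg : ∀ a, 0 ≤ g a)
    (h : ∑' a, ENNReal.ofReal (g a) ≠ ⊤) :
    ∑' a, ENNReal.ofReal (g a) = ENNReal.ofReal (∑' a, g a) :=
  (ENNReal.ofReal_tsum_of_nonneg hg <|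
    (ENNReal.summable_toReal h).congr fun a => ENNReal.toReal_ofReal (hg a)).symm

lemma prod_tsum_poisson_mul_poisson {k : ℕ} {x y : Fin k → ℝ} (hx : ∀ j, 0 < x j)
    (hy : ∀ j, 0 < y j) (f : Fin k → ℤ) :
    ∏ j, ∑' t : ℕ,
        ENNReal.ofReal (exp (-x j) * x j ^ (t + (f j).toNat) / (t + (f j).toNat).factorial) *
        ENNReal.ofReal (exp (-y j) * y j ^ (t + (-f j).toNat) / (t + (-f j).toNat).factorial)
      = ENNReal.ofReal (exp (-(∑ j, x j + ∑ j, y j)) *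
          ∏ j, √(x j / y j) ^ f j * besselI (f j).natAbs (2 * √(x j * y j))) := by
  have hpair (j : Fin k) : ∑' t : ℕ,
        ENNReal.ofReal (exp (-x j) * x j ^ (t + (f j).toNat) / (t + (f j).toNat).factorial) *
        ENNReal.ofReal (exp (-y j) * y j ^ (t + (-f j).toNat) / (t + (-f j).toNat).factorial)
      = ENNReal.ofReal (exp (-x j) * exp (-y j) * √(x j / y j) ^ f j *
          besselI (f j).natAbs (2 * √(x j * y j))) := by
    have hs := hasSum_skellam (hx j) (hy j) (f j)
    have hxj := hx j
    have hyj := hy j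
    rw [← hs.tsum_eq, ENNReal.ofReal_tsum_of_nonneg (fun t => by positivity) hs.summable]
    exact tsum_congr fun t => (ENNReal.ofReal_mul (by positivity)).symm
  have hexp : exp (-(∑ j, x j + ∑ j, y j)) = ∏ j, exp (-x j) * exp (-y j) := by
    simp only [← exp_add, ← exp_sum, Finset.sum_add_distrib, Finset.sum_neg_distrib, neg_add]
  simp only [hpair, hexp, ← Finset.prod_mul_distrib, mul_assoc]
  refine (ENNReal.ofReal_prod_of_nonneg fun j _ => ?_).symm
  have := besselI_nonneg (f j).natAbs (x := 2 * √(x j * y j)) (by positivity)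
  positivity

lemma measure_weighted_diff_eq_tsum {Ω : Type*} [MeasurableSpace Ω] {P : Measure Ω}
    [IsProbabilityMeasure P] {k : ℕ} {N : Fin 2 → Fin k → Ω → ℕ}
    (hmeas : ∀ i j, Measurable (N i j)) (hindep : iIndepFun (fun p : Fin 2 × Fin k => N p.1 p.2) P)
    (c : Fin k → ℕ) (n : ℤ) :
    P {ω | ((∑ j, c j * N 0 j ω : ℕ) : ℤ) - ((∑ j, c j * N 1 j ω : ℕ) : ℤ) = n}
      = ∑' f : Fin k → ℤ, if ∑ j, (c j : ℤ) * f j = n then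
          ∏ j, ∑' t, P {ω | N 0 j ω = t + (f j).toNat} * P {ω | N 1 j ω = t + (-f j).toNat}
          else 0 := by
  have hevent : {ω | ((∑ j, c j * N 0 j ω : ℕ) : ℤ) - ((∑ j, c j * N 1 j ω : ℕ) : ℤ) = n}
      = (fun ω p => N p.1 p.2 ω) ⁻¹' {y | ∑ j, (c j : ℤ) * ((y (0, j) : ℤ) - y (1, j)) = n} := by
    ext ω
    simp [mul_sub, Finset.sum_sub_distrib]
  rw [hevent, measure_preimage_eq_tsum_prod_of_iIndepFun (X := fun p : Fin 2 × Fin k => N p.1 p.2)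
    (fun p => hmeas p.1 p.2) hindep]
  exact tsum_indicator_weighted_diff_eq (fun i j m => P (N i j ⁻¹' {m})) _ n

theorem generalized_skellam_pmf_general {Ω : Type*} [MeasurableSpace Ω]
    (P : Measure Ω) [IsProbabilityMeasure P]
    (k : ℕ) (lam : Fin 2 → Fin k → ℝ)
    (hlam : ∀ i j, 0 < lam i j) (μ : ℝ) (hμ : 0 < μ)
    (N : Fin 2 → Fin k → Ω → ℕ) (hmeas : ∀ i j, Measurable (N i j))
    (hindep : iIndepFun (fun p : Fin 2 × Fin k => N p.1 p.2) P)
    (hpois : ∀ i j, ∀ m : ℕ,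
      P {ω | N i j ω = m} =
        ENNReal.ofReal (Real.exp (-(lam i j * μ)) * (lam i j * μ) ^ m /
          m.factorial)) :
    ∀ n : ℤ,
      P {ω | ((∑ j, (j.1 + 1) * N 0 j ω : ℕ) : ℤ) -
          ((∑ j, (j.1 + 1) * N 1 j ω : ℕ) : ℤ) = n} =
        ENNReal.ofReal (Real.exp (-((∑ j, lam 0 j) + ∑ j, lam 1 j) * μ) *
          ∑' f : Fin k → ℤ,
            if (∑ j, (j.1 + 1 : ℤ) * f j) = n then
              ∏ j, (Real.sqrt (lam 0 j / lam 1 j)) ^ (f j) *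
                besselI (f j).natAbs (2 * μ * Real.sqrt (lam 0 j * lam 1 j))
            else 0) := by
  intro n
  set g : (Fin k → ℤ) → ℝ := fun f => exp (-((∑ j, lam 0 j) + ∑ j, lam 1 j) * μ) *
    if ∑ j, (j.1 + 1 : ℤ) * f j = n then
      ∏ j, √(lam 0 j / lam 1 j) ^ f j * besselI (f j).natAbs (2 * μ * √(lam 0 j * lam 1 j))
    else 0 with hg
  have hg_nonneg (f : Fin k → ℤ) : 0 ≤ g f := by
    refine mul_nonneg (exp_pos _).le ?_
    split_ifs
    exacts [Finset.prod_nonneg fun j _ => by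
      have := besselI_nonneg (f j).natAbs (x := 2 * μ * √(lam 0 j * lam 1 j)) (by positivity)
      positivity, le_rfl]
  have hsum : P {ω | ((∑ j, (j.1 + 1) * N 0 j ω : ℕ) : ℤ) -
      ((∑ j, (j.1 + 1) * N 1 j ω : ℕ) : ℤ) = n} = ∑' f, ENNReal.ofReal (g f) := by
    rw [measure_weighted_diff_eq_tsum hmeas hindep]
    refine tsum_congr fun f => ?_
    push_cast [hg]
    split_ifs
    · simp only [hpois, prod_tsum_poisson_mul_poisson (fun j => mul_pos (hlam 0 j) hμ)
        (fun j => mul_pos (hlam 1 j) hμ), mul_div_mul_right _ _ hμ.ne', sqrt_mul_mul_mul_self hμ.le,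
        ← Finset.sum_mul, neg_mul, add_mul]
      simp only [mul_assoc]
    · simp
  rw [hsum, tsum_ofReal_eq_ofReal_tsum_of_ne_top hg_nonneg (hsum ▸ measure_ne_top P _),
    tsum_mul_left]

/-- The pmf of the generalized Skellam variable `S = M₁ - M₂` as a sum over
`Θ̃(k,n) = {(n₁,…,n_k) ∈ ℤ^k : Σ_j j n_j = n}` of products of Bessel terms. -/
theorem generalized_skellam_pmf {Ω : Type*} [MeasurableSpace Ω]
    (P : Measure Ω) [IsProbabilityMeasure P]
    (k : ℕ) (hk : 1 ≤ k) (lam : Fin 2 → Fin k → ℝ)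
    (hlam : ∀ i j, 0 < lam i j) (μ : ℝ) (hμ : 0 < μ)
    (N : Fin 2 → Fin k → Ω → ℕ) (hmeas : ∀ i j, Measurable (N i j))
    (hindep : iIndepFun (fun p : Fin 2 × Fin k => N p.1 p.2) P)
    (hpois : ∀ i j, ∀ m : ℕ,
      P {ω | N i j ω = m} =
        ENNReal.ofReal (Real.exp (-(lam i j * μ)) * (lam i j * μ) ^ m /
          m.factorial)) :
    ∀ n : ℤ,
      P {ω | ((∑ j, (j.1 + 1) * N 0 j ω : ℕ) : ℤ) -
          ((∑ j, (j.1 + 1) * N 1 j ω : ℕ) : ℤ) = n} =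
        ENNReal.ofReal (Real.exp (-((∑ j, lam 0 j) + ∑ j, lam 1 j) * μ) *
          ∑' f : Fin k → ℤ,
            if (∑ j, (j.1 + 1 : ℤ) * f j) = n then
              ∏ j, (Real.sqrt (lam 0 j / lam 1 j)) ^ (f j) *
                besselI (f j).natAbs (2 * μ * Real.sqrt (lam 0 j * lam 1 j))
            else 0) :=
  generalized_skellam_pmf_general P k lam hlam μ hμ N hmeas hindep hpois
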